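/- arXiv:2204.00702 — 8 statements merged into one kernel-verified Lean document; each statement's English description precedes it below -/
import Mathlib

section
/- Let A, B, Q, Y, M be real n×n matrices such that Y = A·Y·Aᵀ + Q and M = Aᵀ·M·A + Bᵀ. Then trace(B·Y) = trace(Qᵀ·M). -/
open Matrix

/-! `X ↦ A X Aᵀ` and `X ↦ Aᵀ X A` are adjoint for the pairing `⟨X, Z⟩ = trace (Xᵀ Z)`. Writing the
two equations as `Q = Y - A Y Aᵀ` and `Bᵀ = M - Aᵀ M A`, adjointness gives
`⟨Bᵀ, Y⟩ = ⟨M, Y⟩ - ⟨M, A Y Aᵀ⟩ = ⟨M, Q⟩`, and `⟨M, Q⟩ = ⟨Q, M⟩` by transposition. -/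

namespace Matrix

variable {m n R : Type*} [Fintype m] [Fintype n] [CommSemiring R]

theorem trace_transpose_conj_mul (A : Matrix m n R) (M : Matrix m m R) (Y : Matrix n n R) :
    trace ((Aᵀ * M * A)ᵀ * Y) = trace (Mᵀ * (A * Y * Aᵀ)) := by
  simp only [transpose_mul, transpose_transpose, Matrix.mul_assoc]
  rw [trace_mul_comm Aᵀ]
  simp only [Matrix.mul_assoc]

theorem trace_transpose_mul_comm (X Z : Matrix m n R) : trace (Xᵀ * Z) = trace (Zᵀ * X) := by
  rw [← trace_transpose, transpose_mul, transpose_transpose]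

end Matrix

/-- **Property of the solution to Lyapunov equation.**
If `Y = A * Y * Aᵀ + Q` and `M = Aᵀ * M * A + Bᵀ`, then
`trace (B * Y) = trace (Qᵀ * M)`. -/
theorem trace_pairing_of_lyapunov {n : ℕ} (A B Q Y M : Matrix (Fin n) (Fin n) ℝ)
    (hY : Y = A * Y * Aᵀ + Q) (hM : M = Aᵀ * M * A + Bᵀ) :
    (B * Y).trace = (Qᵀ * M).trace := by
  have hB : Bᵀ = M - Aᵀ * M * A := eq_sub_of_add_eq' hM.symm
  have hQ : Q = Y - A * Y * Aᵀ := eq_sub_of_add_eq' hY.symm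
  calc (B * Y).trace = ((M - Aᵀ * M * A)ᵀ * Y).trace := by rw [← hB, transpose_transpose]
    _ = (Mᵀ * (Y - A * Y * Aᵀ)).trace := by
      rw [transpose_sub, Matrix.sub_mul, trace_sub, trace_transpose_conj_mul, Matrix.mul_sub,
        trace_sub]
    _ = (Qᵀ * M).trace := by rw [← hQ, trace_transpose_mul_comm]
end

section
/- Let A be a real n×n matrix such that every eigenvalue of A (viewed as a complex matrix, i.e., every element of the spectrum of A over ℂ) has modulus strictly less than 1, and let Q be a real n×n matrix. Then there exists a unique real n×n matrix Y satisfying the discrete Lyapunov equation Y = A·Y·Aᵀ + Q. -/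
/-!
`Y ↦ Y - A * Y * Aᵀ` is a linear endomorphism of a finite-dimensional space, so it suffices to
show that it is injective. If `Y = A * Y * Aᵀ`, then `Y = Aᵏ * Y * (Aᵏ)ᵀ` for every `k`, and
`Aᵏ → 0` because Gelfand's formula turns the eigenvalue bound into `‖Aᵏ‖ ≤ rᵏ` for some `r < 1`;
hence `Y = 0`.
-/

open Matrix Filter Topology

theorem tendsto_pow_atTop_nhds_zero_of_spectralRadius_lt_one {A : Type*} [NormedRing A]
    [NormedAlgebra ℂ A] [CompleteSpace A] {a : A} (ha : spectralRadius ℂ a < 1) :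
    Tendsto (a ^ ·) atTop (𝓝 0) := by
  obtain ⟨r, hr, hr1⟩ := ENNReal.lt_iff_exists_nnreal_btwn.mp ha
  have hpow : ∀ᶠ k : ℕ in atTop, ‖a ^ k‖ ≤ (r : ℝ) ^ k := by
    have hgelfand := spectrum.pow_nnnorm_pow_one_div_tendsto_nhds_spectralRadius a
    filter_upwards [hgelfand.eventually_lt_const hr, eventually_gt_atTop 0] with k hk hk0
    rw [one_div, ENNReal.rpow_inv_lt_iff (by positivity), ENNReal.rpow_natCast] at hk
    exact_mod_cast hk.le
  exact squeeze_zero_norm' hpow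
    (tendsto_pow_atTop_nhds_zero_of_lt_one r.coe_nonneg (by exact_mod_cast hr1))

namespace Matrix

variable {m : Type*} [Fintype m] [DecidableEq m]

section

attribute [local instance] Matrix.linftyOpNormedRing Matrix.linftyOpNormedAlgebra

theorem tendsto_pow_atTop_nhds_zero_of_forall_spectrum_norm_lt_one {B : Matrix m m ℂ}
    (hB : ∀ μ ∈ spectrum ℂ B, ‖μ‖ < 1) : Tendsto (B ^ ·) atTop (𝓝 0) := by
  cases subsingleton_or_nontrivial (Matrix m m ℂ)
  · simp only [Subsingleton.elim _ (0 : Matrix m m ℂ)]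
    exact tendsto_const_nhds
  exact tendsto_pow_atTop_nhds_zero_of_spectralRadius_lt_one <| by
    simpa using spectrum.spectralRadius_lt_of_forall_lt B (r := 1)
      fun z hz ↦ by exact_mod_cast hB z hz

end

theorem tendsto_pow_atTop_nhds_zero_of_forall_spectrum_map_norm_lt_one {A : Matrix m m ℝ}
    (hA : ∀ μ ∈ spectrum ℂ (A.map (algebraMap ℝ ℂ)), ‖μ‖ < 1) :
    Tendsto (A ^ ·) atTop (𝓝 0) := by
  have hre : Continuous fun M : Matrix m m ℂ ↦ M.map Complex.re :=
    continuous_id.matrix_map Complex.continuous_re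
  have h := (hre.tendsto 0).comp (tendsto_pow_atTop_nhds_zero_of_forall_spectrum_norm_lt_one hA)
  simp only [Function.comp_def, ← Matrix.map_pow, Matrix.map_map] at h
  simpa [Function.comp_def] using h

variable {R : Type*}

theorem eq_zero_of_eq_mul_mul_transpose [CommSemiring R] [TopologicalSpace R]
    [IsTopologicalSemiring R] [T2Space R] {B D : Matrix m m R}
    (hB : Tendsto (B ^ ·) atTop (𝓝 0)) (hD : D = B * D * Bᵀ) : D = 0 := by
  have hconst : ∀ k : ℕ, B ^ k * D * (B ^ k)ᵀ = D := by
    intro k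
    induction k with
    | zero => simp
    | succ k ih =>
      calc B ^ (k + 1) * D * (B ^ (k + 1))ᵀ = B ^ k * (B * D * Bᵀ) * (B ^ k)ᵀ := by
            simp only [pow_succ, transpose_mul, mul_assoc]
        _ = D := by rw [← hD, ih]
  have hlim : Tendsto (fun k : ℕ ↦ B ^ k * D * (B ^ k)ᵀ) atTop (𝓝 (0 * D * 0ᵀ)) :=
    (hB.mul_const D).mul ((continuous_id.matrix_transpose.tendsto 0).comp hB)
  simpa using tendsto_const_nhds_iff.mp (hlim.congr hconst)

variable [CommRing R]

def lyapunovOperator (A : Matrix m m R) : Matrix m m R →ₗ[R] Matrix m m R :=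
  LinearMap.id - LinearMap.mulLeftRight R (A, Aᵀ)

@[simp]
theorem lyapunovOperator_apply (A Y : Matrix m m R) :
    lyapunovOperator A Y = Y - A * Y * Aᵀ :=
  rfl

theorem lyapunovOperator_injective [TopologicalSpace R] [IsTopologicalSemiring R] [T2Space R]
    {A : Matrix m m R} (hA : Tendsto (A ^ ·) atTop (𝓝 0)) :
    Function.Injective (lyapunovOperator A) := by
  rw [← LinearMap.ker_eq_bot, LinearMap.ker_eq_bot']
  exact fun Y hY ↦ eq_zero_of_eq_mul_mul_transpose hA (sub_eq_zero.mp hY)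

end Matrix

/-- **Existence and uniqueness of the solution of the discrete Lyapunov equation.**
If every complex eigenvalue of the real matrix `A` has modulus strictly less than `1`,
then for any real matrix `Q` there is a unique real matrix `Y` with `Y = A * Y * Aᵀ + Q`. -/
theorem discrete_lyapunov_existsUnique {n : ℕ} (A Q : Matrix (Fin n) (Fin n) ℝ)
    (hA : ∀ μ ∈ spectrum ℂ (A.map (algebraMap ℝ ℂ)), ‖μ‖ < 1) :
    ∃! Y : Matrix (Fin n) (Fin n) ℝ, Y = A * Y * Aᵀ + Q := by
  have hinj : Function.Injective (lyapunovOperator A) :=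
    lyapunovOperator_injective (tendsto_pow_atTop_nhds_zero_of_forall_spectrum_map_norm_lt_one hA)
  have hbij : Function.Bijective (lyapunovOperator A) :=
    ⟨hinj, LinearMap.injective_iff_surjective.mp hinj⟩
  refine (existsUnique_congr fun Y ↦ ?_).mp (hbij.existsUnique Q)
  rw [lyapunovOperator_apply, sub_eq_iff_eq_add']
end

section
/- Let E ∈ ℝ^{n×n}, F ∈ ℝ^{n×p}, G ∈ ℝ^{m×n}, H ∈ ℝ^{m×p} and Ē ∈ ℝ^{n×n}, F̄ ∈ ℝ^{n×p}, Ḡ ∈ ℝ^{m×n} satisfy E = Ē, F = Ē·F̄, G = Ḡ, H = Ḡ·F̄. Let y : ℕ → ℝ^p with y(0) = 0, and let x_c, ξ_c : ℕ → ℝ^n and u₁, u₂ : ℕ → ℝ^m satisfy, for all t ≥ 0: x_c(t+1) = E·x_c(t) + F·y(t), u₁(t) = G·x_c(t) + H·y(t), and ξ_c(t+1) = Ē·ξ_c(t) + F̄·y(t+1), u₂(t) = Ḡ·ξ_c(t). If x_c(0) = ξ_c(0), then u₁(t) = u₂(t) for all t ≥ 0. -/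
/-!
The state of form (II) is the state of form (I) shifted by the input fed through `F̄`:
`ξ_c(t) = x_c(t) + F̄ y(t)`. This holds at `t = 0` because `y(0) = 0`, and it propagates
through the two recursions because `F = Ē F̄`. Applying `Ḡ` then gives
`u₂ = G x_c + Ḡ F̄ y = G x_c + H y = u₁`.
-/

open Matrix

theorem compensator_state_eq_add_mulVec {R ι κ : Type*} [Semiring R] [Fintype ι] [Fintype κ]
    (Ebar : Matrix ι ι R) (Fbar : Matrix ι κ R) (y : ℕ → κ → R) (hy0 : y 0 = 0)
    (xc ξc : ℕ → ι → R)
    (hxc : ∀ t, xc (t + 1) = Ebar *ᵥ xc t + (Ebar * Fbar) *ᵥ y t)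
    (hξc : ∀ t, ξc (t + 1) = Ebar *ᵥ ξc t + Fbar *ᵥ y (t + 1))
    (h0 : xc 0 = ξc 0) (t : ℕ) :
    ξc t = xc t + Fbar *ᵥ y t := by
  induction t with
  | zero => rw [hy0, mulVec_zero, add_zero, h0]
  | succ t ih => rw [hξc, ih, hxc, mulVec_add, mulVec_mulVec]

/-- **Equivalent compensator forms.**
If `E = Ē`, `F = Ē·F̄`, `G = Ḡ`, `H = Ḡ·F̄`, the input satisfies `y 0 = 0` and the
initial states coincide, then the compensator of form (I) and the compensator of
form (II) produce the same output sequence. -/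
theorem equivalent_compensator_forms {n p m : ℕ}
    (E Ebar : Matrix (Fin n) (Fin n) ℝ) (F Fbar : Matrix (Fin n) (Fin p) ℝ)
    (G Gbar : Matrix (Fin m) (Fin n) ℝ) (H : Matrix (Fin m) (Fin p) ℝ)
    (hE : E = Ebar) (hF : F = Ebar * Fbar) (hG : G = Gbar) (hH : H = Gbar * Fbar)
    (y : ℕ → Fin p → ℝ) (hy0 : y 0 = 0)
    (xc ξc : ℕ → Fin n → ℝ) (u₁ u₂ : ℕ → Fin m → ℝ)
    (hxc : ∀ t, xc (t + 1) = E.mulVec (xc t) + F.mulVec (y t))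
    (hu₁ : ∀ t, u₁ t = G.mulVec (xc t) + H.mulVec (y t))
    (hξc : ∀ t, ξc (t + 1) = Ebar.mulVec (ξc t) + Fbar.mulVec (y (t + 1)))
    (hu₂ : ∀ t, u₂ t = Gbar.mulVec (ξc t))
    (h0 : xc 0 = ξc 0) :
    ∀ t, u₁ t = u₂ t := by
  subst hE hF hG hH
  intro t
  rw [hu₁, hu₂, compensator_state_eq_add_mulVec E Fbar y hy0 xc ξc hxc hξc h0 t,
    mulVec_add, mulVec_mulVec]
end

section
/- Let A ∈ ℝ^{n×n}, B ∈ ℝ^{n×m}, C ∈ ℝ^{p×n}. Define 𝒪 = [C; CA; ...; CA^n] ∈ ℝ^{(n+1)p×n}, 𝓕₁ ∈ ℝ^{(n+1)p×nm} the block matrix with (i,k) block C·A^{i−1−k}·B for 0 ≤ k < i ≤ n and zero otherwise, 𝓕₂ = [C·A^n·B, C·A^{n−1}·B, ..., C·A·B] ∈ ℝ^{p×nm}, and 𝓕₃, 𝓕₄ obtained from 𝓕₁, 𝓕₂ by replacing B with the n×n identity. Assume 𝒪ᵀ·𝒪 is invertible and set 𝒪^† = (𝒪ᵀ·𝒪)⁻¹·𝒪ᵀ,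 𝒜_u = 𝓕₂ − C·A^{n+1}·𝒪^†·𝓕₁, 𝒜_y = C·A^{n+1}·𝒪^†, 𝒜_w = 𝓕₄ − C·A^{n+1}·𝒪^†·𝓕₃, 𝒜_v = −C·A^{n+1}·𝒪^†. Let x : ℕ → ℝ^n, u : ℕ → ℝ^m, w : ℕ → ℝ^n, v : ℕ → ℝ^p, y : ℕ → ℝ^p satisfy x(t+1) = A·x(t) + B·u(t) + w(t) and y(t) = C·x(t) + v(t) for all t ≥ 0. Then for every t ≥ n, y(t+1) = 𝒜_u·U(t−1) + 𝒜_y·Y(t) + 𝒜_w·W(t−1) + 𝒜_v·V(t) + C·B·u(t) + C·w(t) + v(t+1), where U(t−1) = [u(t−n); ...; u(t−1)], Y(t) = [y(t−n); ...; y(t)], W(t−1) = [w(t−n); ...; w(t−1)], V(t) = [v(t−n); ...; v(t)]. -/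
/-!
Unrolling the state recursion from time `s = t - n` writes the output window `Y(t)` as
`𝒪 x(s) + 𝓕₁ U(t-1) + 𝓕₃ W(t-1) + V(t)` and the next output as
`y(t+1) = C Aⁿ⁺¹ x(s) + 𝓕₂ U(t-1) + 𝓕₄ W(t-1) + C B u(t) + C w(t) + v(t+1)`.
Since `𝒪† 𝒪 = 1`, the unobserved state enters the latter only through `C Aⁿ⁺¹ 𝒪† (𝒪 x(s))`,
and substituting the first identity for `𝒪 x(s)` eliminates it.
-/

open Matrix Finset

section BlockMatrices

variable {R : Type*} {σ ι κ : Type*}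

def blockStack (N : ℕ) (M : ℕ → Matrix κ σ R) : Matrix (Fin N × κ) σ R :=
  of fun ia b => M ia.1 ia.2 b

def blockToeplitz [Zero R] (N n : ℕ) (M : ℕ → Matrix κ ι R) :
    Matrix (Fin N × κ) (Fin n × ι) R :=
  of fun ia kb => if (kb.1 : ℕ) < ia.1 then M (ia.1 - 1 - kb.1) ia.2 kb.2 else 0

def blockRowRev (n : ℕ) (M : ℕ → Matrix κ ι R) : Matrix κ (Fin n × ι) R :=
  of fun a kb => M (n - kb.1) a kb.2

def window (f : ℕ → ι → R) (s N : ℕ) : Fin N × ι → R :=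
  fun kb => f (s + kb.1) kb.2

theorem blockStack_mulVec [Semiring R] [Fintype σ] (N : ℕ) (M : ℕ → Matrix κ σ R) (z : σ → R)
    (i : Fin N) (a : κ) : (blockStack N M *ᵥ z) (i, a) = (M i *ᵥ z) a :=
  rfl

theorem blockToeplitz_mulVec_window [Semiring R] [Fintype ι] {N n : ℕ} (M : ℕ → Matrix κ ι R)
    (f : ℕ → ι → R) (s : ℕ) (i : Fin N) (a : κ) (hi : (i : ℕ) ≤ n) :
    (blockToeplitz N n M *ᵥ window f s n) (i, a) =
      (∑ k ∈ range i, M (i - 1 - k) *ᵥ f (s + k)) a := by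
  have hrange : (range n).filter (· < (i : ℕ)) = range i := by
    ext k; simp only [mem_filter, mem_range]; omega
  simp only [blockToeplitz, window, mulVec, dotProduct, of_apply, Fintype.sum_prod_type, ite_mul,
    zero_mul, sum_ite_irrel, sum_const_zero, Finset.sum_apply]
  rw [Fin.sum_univ_eq_sum_range
      (fun k => if k < (i : ℕ) then ∑ j, M (i - 1 - k) a j * f (s + k) j else 0),
    ← hrange, sum_filter]

theorem blockRowRev_mulVec_window [Semiring R] [Fintype ι] (n : ℕ) (M : ℕ → Matrix κ ι R)
    (f : ℕ → ι → R) (s : ℕ) :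
    blockRowRev n M *ᵥ window f s n = ∑ k ∈ range n, M (n - k) *ᵥ f (s + k) := by
  ext a
  simp only [blockRowRev, window, mulVec, dotProduct, of_apply, Fintype.sum_prod_type,
    Finset.sum_apply]
  exact Fin.sum_univ_eq_sum_range (fun k => ∑ j, M (n - k) a j * f (s + k) j) n

end BlockMatrices

section LinearSystem

variable {R : Type*} [Semiring R] {σ ι κ : Type*} [Fintype σ] [DecidableEq σ] [Fintype ι]
  {A : Matrix σ σ R} {B : Matrix σ ι R} {C : Matrix κ σ R}
  {x w : ℕ → σ → R} {u : ℕ → ι → R} {v y : ℕ → κ → R}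

theorem pow_mulVec_add_sum_of_succ {g : ℕ → σ → R} (hx : ∀ t, x (t + 1) = A *ᵥ x t + g t)
    (s i : ℕ) : x (s + i) = A ^ i *ᵥ x s + ∑ k ∈ range i, A ^ (i - 1 - k) *ᵥ g (s + k) := by
  induction i with
  | zero => simp
  | succ i ih =>
    have hstep : ∀ k ∈ range i,
        A *ᵥ (A ^ (i - 1 - k) *ᵥ g (s + k)) = A ^ (i - k) *ᵥ g (s + k) := by
      intro k hk
      rw [mulVec_mulVec, ← pow_succ']
      have := mem_range.mp hk
      congr 2
      omega
    rw [← add_assoc, hx, ih, sum_range_succ, Nat.add_sub_cancel, Nat.sub_self, pow_zero,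
      one_mulVec, mulVec_add, mulVec_sum, sum_congr rfl hstep, mulVec_mulVec, pow_succ']
    abel

theorem output_eq_pow_mulVec_add_sum (hx : ∀ t, x (t + 1) = A *ᵥ x t + B *ᵥ u t + w t)
    (hy : ∀ t, y t = C *ᵥ x t + v t) (s i : ℕ) :
    y (s + i) = (C * A ^ i) *ᵥ x s + ∑ k ∈ range i,
      ((C * A ^ (i - 1 - k) * B) *ᵥ u (s + k) + (C * A ^ (i - 1 - k)) *ᵥ w (s + k))
      + v (s + i) := by
  have hx' : ∀ t, x (t + 1) = A *ᵥ x t + (B *ᵥ u t + w t) := fun t => by rw [hx, add_assoc]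
  rw [hy, pow_mulVec_add_sum_of_succ hx' s i, mulVec_add, mulVec_sum]
  simp only [mulVec_add, mulVec_mulVec, Matrix.mul_assoc]

theorem window_output_eq (hx : ∀ t, x (t + 1) = A *ᵥ x t + B *ᵥ u t + w t)
    (hy : ∀ t, y t = C *ᵥ x t + v t) (n s : ℕ) :
    window y s (n + 1) = blockStack (n + 1) (fun i => C * A ^ i) *ᵥ x s
      + blockToeplitz (n + 1) n (fun j => C * A ^ j * B) *ᵥ window u s n
      + blockToeplitz (n + 1) n (fun j => C * A ^ j) *ᵥ window w s n + window v s (n + 1) := by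
  ext ⟨i, a⟩
  simp only [Pi.add_apply, blockStack_mulVec, blockToeplitz_mulVec_window _ _ _ _ _ i.is_le]
  rw [window, output_eq_pow_mulVec_add_sum hx hy, sum_add_distrib]
  simp only [Pi.add_apply, add_assoc]
  rfl

theorem output_succ_eq (hx : ∀ t, x (t + 1) = A *ᵥ x t + B *ᵥ u t + w t)
    (hy : ∀ t, y t = C *ᵥ x t + v t) (n s : ℕ) :
    y (s + n + 1) = (C * A ^ (n + 1)) *ᵥ x s
      + blockRowRev n (fun j => C * A ^ j * B) *ᵥ window u s n
      + blockRowRev n (fun j => C * A ^ j) *ᵥ window w s n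
      + (C * B) *ᵥ u (s + n) + C *ᵥ w (s + n) + v (s + n + 1) := by
  rw [blockRowRev_mulVec_window, blockRowRev_mulVec_window, add_assoc s,
    output_eq_pow_mulVec_add_sum hx hy, sum_range_succ, sum_add_distrib]
  simp only [Nat.add_sub_cancel, Nat.sub_self, pow_zero, Matrix.mul_one]
  abel

end LinearSystem

/-- **Equivalent dynamics in the behavioral space.**
With `𝒪† = (𝒪ᵀ𝒪)⁻¹𝒪ᵀ` and `𝒜_u, 𝒜_y, 𝒜_w, 𝒜_v` defined as in Lemma (Equivalent
dynamics), the output of the system satisfies, for all `t ≥ n`,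
`y(t+1) = 𝒜_u U(t-1) + 𝒜_y Y(t) + 𝒜_w W(t-1) + 𝒜_v V(t) + C B u(t) + C w(t) + v(t+1)`. -/
theorem behavioral_dynamics {n m p : ℕ}
    (A : Matrix (Fin n) (Fin n) ℝ) (B : Matrix (Fin n) (Fin m) ℝ)
    (C : Matrix (Fin p) (Fin n) ℝ)
    -- 𝒪 = [C; CA; …; CAⁿ]
    (O : Matrix (Fin (n + 1) × Fin p) (Fin n) ℝ)
    (hO : O = Matrix.of fun ia b => (C * A ^ (ia.1 : ℕ)) ia.2 b)
    -- 𝓕₁ : (i,k) block is C A^{i-1-k} B for k < i, zero otherwise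
    (F₁ : Matrix (Fin (n + 1) × Fin p) (Fin n × Fin m) ℝ)
    (hF₁ : F₁ = Matrix.of fun ia kb =>
      if (kb.1 : ℕ) < (ia.1 : ℕ) then (C * A ^ ((ia.1 : ℕ) - 1 - (kb.1 : ℕ)) * B) ia.2 kb.2 else 0)
    -- 𝓕₂ = [C Aⁿ B, C A^{n-1} B, …, C A B]
    (F₂ : Matrix (Fin p) (Fin n × Fin m) ℝ)
    (hF₂ : F₂ = Matrix.of fun a kb => (C * A ^ (n - (kb.1 : ℕ)) * B) a kb.2)
    -- 𝓕₃, 𝓕₄ : obtained from 𝓕₁, 𝓕₂ by replacing B with the identity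
    (F₃ : Matrix (Fin (n + 1) × Fin p) (Fin n × Fin n) ℝ)
    (hF₃ : F₃ = Matrix.of fun ia kb =>
      if (kb.1 : ℕ) < (ia.1 : ℕ) then (C * A ^ ((ia.1 : ℕ) - 1 - (kb.1 : ℕ))) ia.2 kb.2 else 0)
    (F₄ : Matrix (Fin p) (Fin n × Fin n) ℝ)
    (hF₄ : F₄ = Matrix.of fun a kb => (C * A ^ (n - (kb.1 : ℕ))) a kb.2)
    -- observability: 𝒪ᵀ𝒪 invertible, 𝒪† = (𝒪ᵀ𝒪)⁻¹𝒪ᵀ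
    (hobs : IsUnit (Oᵀ * O).det)
    (Odag : Matrix (Fin n) (Fin (n + 1) × Fin p) ℝ)
    (hOdag : Odag = (Oᵀ * O)⁻¹ * Oᵀ)
    (Au : Matrix (Fin p) (Fin n × Fin m) ℝ) (hAu : Au = F₂ - C * A ^ (n + 1) * Odag * F₁)
    (Ay : Matrix (Fin p) (Fin (n + 1) × Fin p) ℝ) (hAy : Ay = C * A ^ (n + 1) * Odag)
    (Aw : Matrix (Fin p) (Fin n × Fin n) ℝ) (hAw : Aw = F₄ - C * A ^ (n + 1) * Odag * F₃)
    (Av : Matrix (Fin p) (Fin (n + 1) × Fin p) ℝ) (hAv : Av = -(C * A ^ (n + 1) * Odag))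
    (x : ℕ → Fin n → ℝ) (u : ℕ → Fin m → ℝ) (w : ℕ → Fin n → ℝ)
    (v y : ℕ → Fin p → ℝ)
    (hx : ∀ t, x (t + 1) = A.mulVec (x t) + B.mulVec (u t) + w t)
    (hy : ∀ t, y t = C.mulVec (x t) + v t) :
    ∀ t, n ≤ t →
      y (t + 1) = Au.mulVec (fun kb : Fin n × Fin m => u (t - n + (kb.1 : ℕ)) kb.2)
        + Ay.mulVec (fun ja : Fin (n + 1) × Fin p => y (t - n + (ja.1 : ℕ)) ja.2)
        + Aw.mulVec (fun kb : Fin n × Fin n => w (t - n + (kb.1 : ℕ)) kb.2)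
        + Av.mulVec (fun ja : Fin (n + 1) × Fin p => v (t - n + (ja.1 : ℕ)) ja.2)
        + (C * B).mulVec (u t) + C.mulVec (w t) + v (t + 1) := by
  intro t ht
  obtain ⟨s, rfl⟩ : ∃ s, t = s + n := ⟨t - n, by omega⟩
  rw [Nat.add_sub_cancel]
  show y (s + n + 1) = Au *ᵥ window u s n + Ay *ᵥ window y s (n + 1) + Aw *ᵥ window w s n
    + Av *ᵥ window v s (n + 1) + (C * B) *ᵥ u (s + n) + C *ᵥ w (s + n) + v (s + n + 1)
  have hO' : O = blockStack (n + 1) (fun i => C * A ^ i) := hO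
  have hF₁' : F₁ = blockToeplitz (n + 1) n (fun j => C * A ^ j * B) := hF₁
  have hF₂' : F₂ = blockRowRev n (fun j => C * A ^ j * B) := hF₂
  have hF₃' : F₃ = blockToeplitz (n + 1) n (fun j => C * A ^ j) := hF₃
  have hF₄' : F₄ = blockRowRev n (fun j => C * A ^ j) := hF₄
  have hOdagO : Odag * O = 1 := by rw [hOdag, Matrix.mul_assoc, nonsing_inv_mul _ hobs]
  have hAyO : Ay * O = C * A ^ (n + 1) := by rw [hAy, Matrix.mul_assoc, hOdagO, Matrix.mul_one]
  have hOx : O *ᵥ x s = window y s (n + 1) - F₁ *ᵥ window u s n - F₃ *ᵥ window w s n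
      - window v s (n + 1) := by
    rw [window_output_eq hx hy n s, hO', hF₁', hF₃']
    abel
  rw [output_succ_eq hx hy n s, ← hAyO, ← mulVec_mulVec, hOx, ← hF₂', ← hF₄', hAu, hAw, hAv,
    ← hAy]
  simp only [mulVec_sub, sub_mulVec, neg_mulVec, mulVec_mulVec]
  abel
end

section
/- Let n ≥ 1 and let E ∈ ℝ^{n_c×n_c}, F ∈ ℝ^{n_c×p}, G ∈ ℝ^{m×n_c}, H ∈ ℝ^{m×p}, F̄ ∈ ℝ^{n_c×p} satisfy F = E·F̄ and H = G·F̄. Assume the matrix Σ_{i=0}^{n−1} (E^i)ᵀ·Gᵀ·G·E^i is invertible, and let S denote its inverse. Then G·E^{n−1}·F = G·E^{n}·S·( Gᵀ·H + Σ_{i=1}^{n−1} (E^i)ᵀ·Gᵀ·G·E^{i−1}·F ). -/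
/-!
Since `H = G F̄` and `E^{i-1} F = Eⁱ F̄`, the bracket is the observability Gramian
`M = ∑_{i<n} (Eⁱ)ᵀ Gᵀ G Eⁱ` applied to `F̄`. Hence `S` cancels against `M`, and the right-hand
side collapses to `G Eⁿ F̄ = G E^{n-1} (E F̄) = G E^{n-1} F`.
-/

open Matrix Finset

lemma Finset.sum_range_eq_add_sum_Icc_one_sub_one {M : Type*} [AddCommMonoid M] {n : ℕ}
    (hn : 1 ≤ n) (f : ℕ → M) :
    ∑ i ∈ range n, f i = f 0 + ∑ i ∈ Icc 1 (n - 1), f i := by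
  obtain ⟨k, rfl⟩ := Nat.exists_eq_add_of_le' hn
  rw [sum_range_succ', add_comm, Nat.add_sub_cancel, ← Ico_add_one_right_eq_Icc,
    sum_Ico_eq_sum_range, Nat.add_sub_cancel]
  simp only [add_comm 1]

section

variable {R ι κ μ : Type*} [Semiring R] [Fintype ι] [DecidableEq ι] [Fintype μ]

lemma Matrix.pow_sub_one_mul_mul (E : Matrix ι ι R) (X : Matrix ι κ R) {i : ℕ} (hi : i ≠ 0) :
    E ^ (i - 1) * (E * X) = E ^ i * X := by
  rw [← Matrix.mul_assoc, pow_sub_one_mul hi]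

def Matrix.observabilityGramian (n : ℕ) (E : Matrix ι ι R) (G : Matrix μ ι R) : Matrix ι ι R :=
  ∑ i ∈ range n, (E ^ i)ᵀ * Gᵀ * G * E ^ i

lemma Matrix.observabilityGramian_mul {n : ℕ} (hn : 1 ≤ n) (E : Matrix ι ι R)
    (G : Matrix μ ι R) (Fbar : Matrix ι κ R) :
    observabilityGramian n E G * Fbar
      = Gᵀ * (G * Fbar)
        + ∑ i ∈ Icc 1 (n - 1), (E ^ i)ᵀ * Gᵀ * G * E ^ (i - 1) * (E * Fbar) := by
  rw [observabilityGramian, Matrix.sum_mul, sum_range_eq_add_sum_Icc_one_sub_one hn]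
  congr 1
  · simp [Matrix.mul_assoc]
  · refine sum_congr rfl fun i hi => ?_
    have hi0 : i ≠ 0 := Nat.one_le_iff_ne_zero.mp (mem_Icc.mp hi).1
    rw [Matrix.mul_assoc _ (E ^ (i - 1)), pow_sub_one_mul_mul E Fbar hi0, Matrix.mul_assoc]

end

/-- **Algebraic core of the sparsity of the optimal behavioral LQG gain (`𝒦₂ = 0`).**
If `F = E F̄`, `H = G F̄`, and `S` is the inverse of `∑_{i=0}^{n-1} (Eⁱ)ᵀ Gᵀ G Eⁱ`, then
`G E^{n-1} F = G Eⁿ S (Gᵀ H + ∑_{i=1}^{n-1} (Eⁱ)ᵀ Gᵀ G E^{i-1} F)`. -/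
theorem lqg_gain_sparsity_core {n nc p m : ℕ} (hn : 1 ≤ n)
    (E : Matrix (Fin nc) (Fin nc) ℝ) (F Fbar : Matrix (Fin nc) (Fin p) ℝ)
    (G : Matrix (Fin m) (Fin nc) ℝ) (H : Matrix (Fin m) (Fin p) ℝ)
    (hF : F = E * Fbar) (hH : H = G * Fbar)
    (hinv : IsUnit (∑ i ∈ Finset.range n, (E ^ i)ᵀ * Gᵀ * G * E ^ i).det)
    (S : Matrix (Fin nc) (Fin nc) ℝ)
    (hS : S = (∑ i ∈ Finset.range n, (E ^ i)ᵀ * Gᵀ * G * E ^ i)⁻¹) :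
    G * E ^ (n - 1) * F
      = G * E ^ n * S * (Gᵀ * H + ∑ i ∈ Finset.Icc 1 (n - 1), (E ^ i)ᵀ * Gᵀ * G * E ^ (i - 1) * F) := by
  have hSM : S * observabilityGramian n E G = 1 := hS ▸ nonsing_inv_mul _ hinv
  rw [hH, hF, ← observabilityGramian_mul hn]
  simp only [Matrix.mul_assoc]
  rw [← Matrix.mul_assoc S, hSM, Matrix.one_mul, pow_sub_one_mul_mul E Fbar (Nat.one_le_iff_ne_zero.mp hn)]
end

section
/- Let 𝒜_c, P, dP, X, M, Q_K be real N×N matrices and let B_u ∈ ℝ^{N×m}, C_z ∈ ℝ^{q×N}, dK ∈ ℝ^{m×q}. Assume P, M, Q_K are symmetric, M = 𝒜_cᵀ·M·𝒜_c + Q_K, X = (B_u·dK·C_z)·P·𝒜_cᵀ + 𝒜_c·P·(B_u·dK·C_z)ᵀ, and dP = 𝒜_c·dP·𝒜_cᵀ + X. Then trace(Q_K·dP) = 2·trace(C_z·P·𝒜_cᵀ·M·B_u·dK). -/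
/-!
Writing `Q_K = M - 𝒜_cᵀ M 𝒜_c` and `X = dP - 𝒜_c dP 𝒜_cᵀ`, cyclicity of the trace moves the
closed-loop factors from `M` onto `dP`, so `trace (Q_K dP) = trace (M X)`: the two Lyapunov
equations are adjoint to each other. Since `P` is symmetric, `X = Y + Yᵀ` with
`Y = (B_u dK C_z) P 𝒜_cᵀ`, and since `M` is symmetric `trace (M Yᵀ) = trace (M Y)`.
-/

open Matrix

namespace Matrix

variable {n R : Type*} [Fintype n] [CommRing R]

theorem trace_mul_eq_of_lyapunov {A M Q P X : Matrix n n R}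
    (hM : M = Aᵀ * M * A + Q) (hP : P = A * P * Aᵀ + X) :
    (Q * P).trace = (M * X).trace := by
  have hQ : Q = M - Aᵀ * M * A := eq_sub_of_add_eq' hM.symm
  have hX : X = P - A * P * Aᵀ := eq_sub_of_add_eq' hP.symm
  have hcycle : (Aᵀ * M * A * P).trace = (M * (A * P * Aᵀ)).trace := by
    rw [Matrix.mul_assoc, Matrix.mul_assoc, trace_mul_comm]
    simp only [Matrix.mul_assoc]
  rw [hQ, hX, sub_mul, mul_sub, trace_sub, trace_sub, hcycle]

theorem trace_mul_add_transpose {M : Matrix n n R} (hM : Mᵀ = M) (Y : Matrix n n R) :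
    (M * (Y + Yᵀ)).trace = 2 * (M * Y).trace := by
  have hYt : (M * Yᵀ).trace = (M * Y).trace := by
    rw [← trace_transpose, transpose_mul, transpose_transpose, hM, trace_mul_comm]
  rw [mul_add, trace_add, hYt, two_mul]

end Matrix

theorem trace_QK_dP_general {N m q : ℕ}
    (Ac P dP X M QK : Matrix (Fin N) (Fin N) ℝ)
    (Bu : Matrix (Fin N) (Fin m) ℝ) (Cz : Matrix (Fin q) (Fin N) ℝ)
    (dK : Matrix (Fin m) (Fin q) ℝ)
    (hP : Pᵀ = P) (hM : Mᵀ = M)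
    (hMeq : M = Acᵀ * M * Ac + QK)
    (hX : X = (Bu * dK * Cz) * P * Acᵀ + Ac * P * (Bu * dK * Cz)ᵀ)
    (hdP : dP = Ac * dP * Acᵀ + X) :
    (QK * dP).trace = 2 * (Cz * P * Acᵀ * M * Bu * dK).trace := by
  have hXsymm : X = Bu * dK * Cz * P * Acᵀ + (Bu * dK * Cz * P * Acᵀ)ᵀ := by
    simp only [hX, transpose_mul, transpose_transpose, hP, Matrix.mul_assoc]
  have hcycle : (M * (Bu * dK * Cz * P * Acᵀ)).trace = (Cz * P * Acᵀ * M * Bu * dK).trace :=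
    calc (M * (Bu * dK * Cz * P * Acᵀ)).trace
        = ((Bu * dK) * (Cz * P * Acᵀ * M)).trace := by
          rw [trace_mul_comm]; simp only [Matrix.mul_assoc]
      _ = (Cz * P * Acᵀ * M * (Bu * dK)).trace := trace_mul_comm _ _
      _ = (Cz * P * Acᵀ * M * Bu * dK).trace := by rw [Matrix.mul_assoc _ Bu]
  rw [trace_mul_eq_of_lyapunov hMeq hdP, hXsymm, trace_mul_add_transpose hM, hcycle]

/-- **Trace identity for the differential of the covariance.**
If `M = 𝒜_cᵀ M 𝒜_c + Q_K`, `X = (B_u dK C_z) P 𝒜_cᵀ + 𝒜_c P (B_u dK C_z)ᵀ`, and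
`dP = 𝒜_c dP 𝒜_cᵀ + X`, then `trace (Q_K dP) = 2 trace (C_z P 𝒜_cᵀ M B_u dK)`. -/
theorem trace_QK_dP {N m q : ℕ}
    (Ac P dP X M QK : Matrix (Fin N) (Fin N) ℝ)
    (Bu : Matrix (Fin N) (Fin m) ℝ) (Cz : Matrix (Fin q) (Fin N) ℝ)
    (dK : Matrix (Fin m) (Fin q) ℝ)
    (hP : Pᵀ = P) (hM : Mᵀ = M) (hQK : QKᵀ = QK)
    (hMeq : M = Acᵀ * M * Ac + QK)
    (hX : X = (Bu * dK * Cz) * P * Acᵀ + Ac * P * (Bu * dK * Cz)ᵀ)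
    (hdP : dP = Ac * dP * Acᵀ + X) :
    (QK * dP).trace = 2 * (Cz * P * Acᵀ * M * Bu * dK).trace :=
  trace_QK_dP_general Ac P dP X M QK Bu Cz dK hP hM hMeq hX hdP
end

section
/- Let P be a real symmetric positive semidefinite N×N matrix, C ∈ ℝ^{q×N}, and S ∈ ℝ^{q×q} such that (C·P·Cᵀ)·S·(C·P·Cᵀ) = C·P·Cᵀ. Then P·Cᵀ·S·C·P·Cᵀ = P·Cᵀ. -/
/-!
Factor `P = Lᴴ L` and put `B = C Lᴴ`, so that `C P Cᴴ = B Bᴴ` and `P Cᴴ = Lᴴ Bᴴ`. Since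
`B Bᴴ Z = 0` forces `Bᴴ Z = 0`, the hypothesis `B Bᴴ (S B Bᴴ - 1) = 0` gives
`Bᴴ (S B Bᴴ - 1) = 0`; multiplying on the left by `Lᴴ` yields the claim.
-/

open Matrix

namespace Matrix

theorem conjTranspose_mul_mul_self_mul_conjTranspose_eq {m n R : Type*} [Fintype m] [Fintype n]
    [DecidableEq m] [PartialOrder R] [Ring R] [StarRing R] [StarOrderedRing R] [NoZeroDivisors R]
    {B : Matrix m n R} {S : Matrix m m R} (h : B * Bᴴ * S * (B * Bᴴ) = B * Bᴴ) :
    Bᴴ * S * (B * Bᴴ) = Bᴴ := by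
  have hE : B * Bᴴ * (S * (B * Bᴴ) - 1) = 0 := by
    rw [Matrix.mul_sub, ← Matrix.mul_assoc, h, Matrix.mul_one, sub_self]
  rw [self_mul_conjTranspose_mul_eq_zero, Matrix.mul_sub, Matrix.mul_one, sub_eq_zero] at hE
  rwa [Matrix.mul_assoc]

open scoped ComplexOrder MatrixOrder in
theorem PosSemidef.mul_conjTranspose_mul_mul_eq {m n 𝕜 : Type*} [Fintype m] [Fintype n]
    [RCLike 𝕜] {P : Matrix n n 𝕜} (hP : P.PosSemidef) {C : Matrix m n 𝕜} {S : Matrix m m 𝕜}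
    (h : C * P * Cᴴ * S * (C * P * Cᴴ) = C * P * Cᴴ) :
    P * Cᴴ * S * (C * P * Cᴴ) = P * Cᴴ := by
  classical
  obtain ⟨L, rfl⟩ := CStarAlgebra.nonneg_iff_eq_star_mul_self.mp hP.nonneg
  have hB := conjTranspose_mul_mul_self_mul_conjTranspose_eq (B := C * Lᴴ) (S := S) <| by
    simpa only [conjTranspose_mul, conjTranspose_conjTranspose, star_eq_conjTranspose,
      Matrix.mul_assoc] using h
  simp only [conjTranspose_mul, conjTranspose_conjTranspose] at hB
  simpa only [star_eq_conjTranspose, Matrix.mul_assoc] using congrArg (Lᴴ * ·) hB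

end Matrix

/-- **Pseudoinverse property through a positive semidefinite factor.**
If `P` is real symmetric positive semidefinite and `S` satisfies the first Moore–Penrose
condition `(C P Cᵀ) S (C P Cᵀ) = C P Cᵀ`, then `P Cᵀ S C P Cᵀ = P Cᵀ`. -/
theorem psd_pseudoinverse_property {N q : ℕ}
    (P : Matrix (Fin N) (Fin N) ℝ) (hP : P.PosSemidef)
    (C : Matrix (Fin q) (Fin N) ℝ) (S : Matrix (Fin q) (Fin q) ℝ)
    (hS : (C * P * Cᵀ) * S * (C * P * Cᵀ) = C * P * Cᵀ) :
    P * Cᵀ * S * C * P * Cᵀ = P * Cᵀ := by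
  rw [← conjTranspose_eq_transpose_of_trivial] at hS ⊢
  simpa only [Matrix.mul_assoc] using hP.mul_conjTranspose_mul_mul_eq hS
end

section
/- Let 𝒜, P, M be real N×N matrices, B_u ∈ ℝ^{N×m}, B_w ∈ ℝ^{N×r}, B_v ∈ ℝ^{N×s}, C_z ∈ ℝ^{q×N}, R_u, Q_w, R_v symmetric real matrices of sizes m×m, r×r, s×s, and S_P ∈ ℝ^{q×q}. Assume P, M, S_P are symmetric, R_u + B_uᵀ·M·B_u is invertible with symmetric inverse S_M = (R_u + B_uᵀ·M·B_u)⁻¹, and S_P·(C_z·P·C_zᵀ)·S_P = S_P. Set K = −S_M·B_uᵀ·M·𝒜·P·C_zᵀ·S_P. If P = (𝒜 + B_u·K·C_z)·P·(𝒜 + B_u·K·C_z)ᵀ + B_w·Q_w·B_wᵀ + B_v·R_v·B_vᵀ, then P = 𝒜·P·𝒜ᵀ − 𝒜·P·C_zᵀ·S_P·C_z·P·𝒜ᵀ + B_w·Q_w·B_wᵀ + B_v·R_v·B_vᵀ + (I − M·B_u·S_M·B_uᵀ)ᵀ·𝒜·P·C_zᵀ·S_P·C_z·P·𝒜ᵀ·(I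 − M·B_u·S_M·B_uᵀ). -/
/-!
Writing `Q = P C_zᵀ S_P C_z`, the feedback term is `B_u K C_z = -Gᵀ 𝒜 Q` with
`G = M B_u S_M B_uᵀ`. The pseudoinverse identity makes `Q` a `P`-self-adjoint projection
(`P Qᵀ = Q P = Q P Qᵀ`), so the closed-loop covariance expands to
`𝒜 P 𝒜ᵀ - Gᵀ X - X G + Gᵀ X G` with `X = 𝒜 Q P 𝒜ᵀ`, which is the Riccati right-hand side
`𝒜 P 𝒜ᵀ - X + (I - G)ᵀ X (I - G)`.
-/

open Matrix

namespace Matrix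

variable {R : Type*} [CommRing R] {l n : Type*} [Fintype n]

theorem add_mul_mul_transpose_add (A E : Matrix l n R) (P : Matrix n n R) :
    (A + E) * P * (A + E)ᵀ = A * P * Aᵀ + E * P * Aᵀ + A * P * Eᵀ + E * P * Eᵀ := by
  simp only [transpose_add, Matrix.add_mul, Matrix.mul_add]
  abel

theorem transpose_one_sub_mul_mul_one_sub [DecidableEq n] (G X : Matrix n n R) :
    (1 - G)ᵀ * X * (1 - G) = X - Gᵀ * X - X * G + Gᵀ * X * G := by
  simp only [transpose_sub, transpose_one, Matrix.sub_mul, Matrix.mul_sub, Matrix.one_mul,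
    Matrix.mul_one]
  abel

theorem sub_mul_mul_transpose_sub_of_proj [DecidableEq n] (A P G Q : Matrix n n R)
    (hsymm : P * Qᵀ = Q * P) (hproj : Q * P * Qᵀ = Q * P) :
    (A - Gᵀ * A * Q) * P * (A - Gᵀ * A * Q)ᵀ
      = A * P * Aᵀ - A * Q * P * Aᵀ + (1 - G)ᵀ * (A * Q * P * Aᵀ) * (1 - G) := by
  have hcross : A * P * (Gᵀ * A * Q)ᵀ = A * Q * P * Aᵀ * G := by
    simp only [transpose_mul, transpose_transpose, ← Matrix.mul_assoc]
    rw [Matrix.mul_assoc A P, hsymm, ← Matrix.mul_assoc]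
  have hquad : Gᵀ * A * Q * P * (Gᵀ * A * Q)ᵀ = Gᵀ * (A * Q * P * Aᵀ) * G := by
    simp only [transpose_mul, transpose_transpose, ← Matrix.mul_assoc]
    rw [Matrix.mul_assoc (Gᵀ * A) Q P, Matrix.mul_assoc (Gᵀ * A), hproj]
  rw [sub_eq_add_neg, add_mul_mul_transpose_add, transpose_one_sub_mul_mul_one_sub]
  simp only [transpose_neg, neg_mul, mul_neg, neg_neg, hcross, hquad]
  simp only [Matrix.mul_assoc]
  abel

variable {q : Type*} [Fintype q]

theorem mul_transpose_proj_eq_proj_mul (P : Matrix n n R) (C : Matrix q n R) (S : Matrix q q R)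
    (hP : Pᵀ = P) (hS : Sᵀ = S) :
    P * (P * Cᵀ * S * C)ᵀ = P * Cᵀ * S * C * P := by
  simp only [transpose_mul, transpose_transpose, hP, hS, Matrix.mul_assoc]

theorem proj_mul_mul_transpose_eq_of_pseudoinverse (P : Matrix n n R) (C : Matrix q n R)
    (S : Matrix q q R) (hP : Pᵀ = P) (hS : Sᵀ = S) (hpseudo : S * (C * P * Cᵀ) * S = S) :
    P * Cᵀ * S * C * P * (P * Cᵀ * S * C)ᵀ = P * Cᵀ * S * C * P := by
  rw [Matrix.mul_assoc _ P, mul_transpose_proj_eq_proj_mul P C S hP hS]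
  calc P * Cᵀ * S * C * (P * Cᵀ * S * C * P)
      = P * Cᵀ * (S * (C * P * Cᵀ) * S) * C * P := by simp only [Matrix.mul_assoc]
    _ = P * Cᵀ * S * C * P := by rw [hpseudo]

end Matrix

theorem behavioral_riccati_P_general {N m r s q : ℕ}
    (A P M : Matrix (Fin N) (Fin N) ℝ)
    (Bu : Matrix (Fin N) (Fin m) ℝ) (Bw : Matrix (Fin N) (Fin r) ℝ)
    (Bv : Matrix (Fin N) (Fin s) ℝ) (Cz : Matrix (Fin q) (Fin N) ℝ)
    (Qw : Matrix (Fin r) (Fin r) ℝ)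
    (Rv : Matrix (Fin s) (Fin s) ℝ) (SP : Matrix (Fin q) (Fin q) ℝ)
    (hP : Pᵀ = P) (hM : Mᵀ = M) (hSP : SPᵀ = SP)
    (SM : Matrix (Fin m) (Fin m) ℝ) (hSMsymm : SMᵀ = SM)
    (hpseudo : SP * (Cz * P * Czᵀ) * SP = SP)
    (K : Matrix (Fin m) (Fin q) ℝ)
    (hK : K = -(SM * Buᵀ * M * A * P * Czᵀ * SP))
    (hlyap : P = (A + Bu * K * Cz) * P * (A + Bu * K * Cz)ᵀ + Bw * Qw * Bwᵀ + Bv * Rv * Bvᵀ) :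
    P = A * P * Aᵀ - A * P * Czᵀ * SP * Cz * P * Aᵀ + Bw * Qw * Bwᵀ + Bv * Rv * Bvᵀ
      + (1 - M * Bu * SM * Buᵀ)ᵀ * (A * P * Czᵀ * SP * Cz * P * Aᵀ)
          * (1 - M * Bu * SM * Buᵀ) := by
  set G := M * Bu * SM * Buᵀ
  set Q := P * Czᵀ * SP * Cz
  have hfeedback : A + Bu * K * Cz = A - Gᵀ * A * Q := by
    simp only [G, Q, hK, transpose_mul, hM, hSMsymm, transpose_transpose, Matrix.mul_neg,
      Matrix.neg_mul, ← sub_eq_add_neg, Matrix.mul_assoc]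
  conv_lhs => rw [hlyap, hfeedback, sub_mul_mul_transpose_sub_of_proj A P G Q
    (mul_transpose_proj_eq_proj_mul P Cz SP hP hSP)
    (proj_mul_mul_transpose_eq_of_pseudoinverse P Cz SP hP hSP hpseudo)]
  simp only [Q, Matrix.mul_assoc]
  abel

/-- **Riccati equation for `P` in the behavioral LQG solution (Theorem 1).**
With the optimal gain `K = -S_M B_uᵀ M 𝒜 P C_zᵀ S_P`, the closed-loop Lyapunov equation
`P = 𝒜_c P 𝒜_cᵀ + B_w Q_w B_wᵀ + B_v R_v B_vᵀ` implies the coupled Riccati equation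
`P = 𝒜 P 𝒜ᵀ - 𝒜 P C_zᵀ S_P C_z P 𝒜ᵀ + B_w Q_w B_wᵀ + B_v R_v B_vᵀ
   + (I - M B_u S_M B_uᵀ)ᵀ 𝒜 P C_zᵀ S_P C_z P 𝒜ᵀ (I - M B_u S_M B_uᵀ)`. -/
theorem behavioral_riccati_P {N m r s q : ℕ}
    (A P M : Matrix (Fin N) (Fin N) ℝ)
    (Bu : Matrix (Fin N) (Fin m) ℝ) (Bw : Matrix (Fin N) (Fin r) ℝ)
    (Bv : Matrix (Fin N) (Fin s) ℝ) (Cz : Matrix (Fin q) (Fin N) ℝ)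
    (Ru : Matrix (Fin m) (Fin m) ℝ) (Qw : Matrix (Fin r) (Fin r) ℝ)
    (Rv : Matrix (Fin s) (Fin s) ℝ) (SP : Matrix (Fin q) (Fin q) ℝ)
    (hRu : Ruᵀ = Ru) (hQw : Qwᵀ = Qw) (hRv : Rvᵀ = Rv)
    (hP : Pᵀ = P) (hM : Mᵀ = M) (hSP : SPᵀ = SP)
    (hinv : IsUnit (Ru + Buᵀ * M * Bu).det)
    (SM : Matrix (Fin m) (Fin m) ℝ) (hSM : SM = (Ru + Buᵀ * M * Bu)⁻¹) (hSMsymm : SMᵀ = SM)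
    (hpseudo : SP * (Cz * P * Czᵀ) * SP = SP)
    (K : Matrix (Fin m) (Fin q) ℝ)
    (hK : K = -(SM * Buᵀ * M * A * P * Czᵀ * SP))
    (hlyap : P = (A + Bu * K * Cz) * P * (A + Bu * K * Cz)ᵀ + Bw * Qw * Bwᵀ + Bv * Rv * Bvᵀ) :
    P = A * P * Aᵀ - A * P * Czᵀ * SP * Cz * P * Aᵀ + Bw * Qw * Bwᵀ + Bv * Rv * Bvᵀ
      + (1 - M * Bu * SM * Buᵀ)ᵀ * (A * P * Czᵀ * SP * Cz * P * Aᵀ)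
          * (1 - M * Bu * SM * Buᵀ) :=
  behavioral_riccati_P_general A P M Bu Bw Bv Cz Qw Rv SP hP hM hSP SM hSMsymm hpseudo K hK hlyap
end
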